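/- arXiv:1608.01176 — 2 statements merged into one kernel-verified Lean document; each statement's English description precedes it below -/
import Mathlib

section
/- Let ω > 0 and let S(x, φ) = ∫₀^ω [½(x(t)² + 1)φ̇(t)² + ½ẋ(t)² − x(t)·sin φ(t)] dt. Then for every pair (x, φ) ∈ H¹_o(ℝ) × H¹_o(ℝ) one has S(x, φ) ≥ ½‖φ̇‖²_{L²(0,ω)} + ½‖ẋ‖²_{L²(0,ω)} − (ω^{3/2}/√2)·‖ẋ‖_{L²(0,ω)}. -/
open MeasureTheory

noncomputable section

/-- A function `u : ℝ → ℝ` belongs to `H¹_loc(ℝ)` (we work with continuous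
representatives): `u` is continuous and is the indefinite integral of a locally
square-integrable weak derivative. -/
def IsLocH1 (u : ℝ → ℝ) : Prop :=
  Continuous u ∧
    ∃ u' : ℝ → ℝ,
      (∀ n : ℕ, MemLp u' 2 (volume.restrict (Set.Ioo (-(n : ℝ)) n))) ∧
      ∀ t : ℝ, u t = u 0 + ∫ s in (0 : ℝ)..t, u' s

/-- A locally `L²` function is interval integrable. -/
lemma intervalIntegrable_of_memL2loc {f : ℝ → ℝ}
    (hf : ∀ n : ℕ, MemLp f 2 (volume.restrict (Set.Ioo (-(n : ℝ)) n)))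
    (a b : ℝ) : IntervalIntegrable f volume a b := by
  obtain ⟨n, hn⟩ := exists_nat_gt (max |a| |b|)
  haveI : IsFiniteMeasure (volume.restrict (Set.Ioo (-(n : ℝ)) n)) :=
    ⟨by rw [Measure.restrict_apply_univ]; exact measure_Ioo_lt_top⟩
  have hint : IntegrableOn f (Set.Ioo (-(n : ℝ)) n) volume :=
    (hf n).integrable one_le_two
  rw [intervalIntegrable_iff]
  refine hint.mono_set fun x hx => ?_
  have hxIcc := Set.uIoc_subset_uIcc hx
  rw [Set.mem_uIcc] at hxIcc
  have h1 := le_abs_self a; have h2 := neg_abs_le a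
  have h3 := le_abs_self b; have h4 := neg_abs_le b
  have h5 := le_max_left |a| |b|; have h6 := le_max_right |a| |b|
  constructor
  · rcases hxIcc with ⟨ha1, _⟩ | ⟨hb1, _⟩ <;> linarith
  · rcases hxIcc with ⟨_, ha2⟩ | ⟨_, hb2⟩ <;> linarith

lemma IsLocH1.zero : IsLocH1 (0 : ℝ → ℝ) :=
  ⟨continuous_const, 0, fun _ => MemLp.zero, fun t => by simp⟩

lemma IsLocH1.add {u v : ℝ → ℝ} (hu : IsLocH1 u) (hv : IsLocH1 v) : IsLocH1 (u + v) := by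
  obtain ⟨hcu, u', hu1, hu2⟩ := hu
  obtain ⟨hcv, v', hv1, hv2⟩ := hv
  refine ⟨hcu.add hcv, u' + v', fun n => (hu1 n).add (hv1 n), fun t => ?_⟩
  have hiu := intervalIntegrable_of_memL2loc hu1 0 t
  have hiv := intervalIntegrable_of_memL2loc hv1 0 t
  simp only [Pi.add_apply]
  rw [intervalIntegral.integral_add hiu hiv, hu2 t, hv2 t]
  ring

lemma IsLocH1.smul (c : ℝ) {u : ℝ → ℝ} (hu : IsLocH1 u) : IsLocH1 (c • u) := by
  obtain ⟨hcu, u', hu1, hu2⟩ := hu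
  refine ⟨hcu.const_smul c, fun s => c * u' s, fun n => (hu1 n).const_mul c, fun t => ?_⟩
  simp only [Pi.smul_apply, smul_eq_mul]
  rw [intervalIntegral.integral_const_mul, hu2 t]
  ring

lemma IsLocH1.neg {u : ℝ → ℝ} (hu : IsLocH1 u) : IsLocH1 (-u) := by
  simpa using hu.smul (-1)

/-- The space `H¹_loc(ℝ)` (continuous representatives). -/
def H1loc : Type := { u : ℝ → ℝ // IsLocH1 u }

namespace H1loc

/-- A weak derivative of `u ∈ H¹_loc(ℝ)` (it is unique up to a.e. equality). -/
def wderiv (u : H1loc) : ℝ → ℝ := u.2.2.choose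

lemma wderiv_memL2loc (u : H1loc) :
    ∀ n : ℕ, MemLp (wderiv u) 2 (volume.restrict (Set.Ioo (-(n : ℝ)) n)) :=
  u.2.2.choose_spec.1

lemma integral_wderiv (u : H1loc) (t : ℝ) :
    u.1 t = u.1 0 + ∫ s in (0 : ℝ)..t, wderiv u s :=
  u.2.2.choose_spec.2 t

instance : Zero H1loc := ⟨⟨0, IsLocH1.zero⟩⟩
instance : Add H1loc := ⟨fun u v => ⟨u.1 + v.1, u.2.add v.2⟩⟩
instance : Neg H1loc := ⟨fun u => ⟨-u.1, u.2.neg⟩⟩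
instance : SMul ℝ H1loc := ⟨fun c u => ⟨c • u.1, u.2.smul c⟩⟩

@[simp] lemma coe_zero : (0 : H1loc).1 = (0 : ℝ → ℝ) := rfl
@[simp] lemma coe_add (u v : H1loc) : (u + v).1 = u.1 + v.1 := rfl
@[simp] lemma coe_neg (u : H1loc) : (-u).1 = -u.1 := rfl
@[simp] lemma coe_smul (c : ℝ) (u : H1loc) : (c • u).1 = c • u.1 := rfl

instance : AddCommGroup H1loc where
  add_assoc a b c := Subtype.ext (add_assoc a.1 b.1 c.1)
  zero_add a := Subtype.ext (zero_add a.1)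
  add_zero a := Subtype.ext (add_zero a.1)
  add_comm a b := Subtype.ext (add_comm a.1 b.1)
  neg_add_cancel a := Subtype.ext (neg_add_cancel a.1)
  nsmul := nsmulRec
  zsmul := zsmulRec

instance : Module ℝ H1loc where
  one_smul u := Subtype.ext (one_smul ℝ u.1)
  mul_smul a b u := Subtype.ext (mul_smul a b u.1)
  smul_zero a := Subtype.ext (smul_zero (M := ℝ) (A := ℝ → ℝ) a)
  smul_add a u v := Subtype.ext (smul_add a u.1 v.1)
  add_smul a b u := Subtype.ext (add_smul a b u.1)
  zero_smul u := Subtype.ext (zero_smul ℝ u.1)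

end H1loc

/-- The subspace `H¹_o(ℝ)` of odd functions in `H¹_loc(ℝ)`. -/
def Hodd : Submodule ℝ H1loc where
  carrier := { u | ∀ t : ℝ, u.1 (-t) = - u.1 t }
  add_mem' := by
    intro u v hu hv t
    simp only [H1loc.coe_add, Pi.add_apply, hu t, hv t]
    ring
  zero_mem' := by intro t; simp only [H1loc.coe_zero, Pi.zero_apply, neg_zero]
  smul_mem' := by
    intro c u hu t
    simp only [H1loc.coe_smul, Pi.smul_apply, hu t, smul_eq_mul]
    ring

/-- The subspace `X_ω` of odd `ω`-periodic functions in `H¹_loc(ℝ)`. -/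
def Xomega (ω : ℝ) : Submodule ℝ H1loc where
  carrier := { u | (∀ t : ℝ, u.1 (-t) = - u.1 t) ∧ ∀ t : ℝ, u.1 (t + ω) = u.1 t }
  add_mem' := by
    intro u v hu hv
    refine ⟨fun t => ?_, fun t => ?_⟩
    · simp only [H1loc.coe_add, Pi.add_apply, hu.1 t, hv.1 t]; ring
    · simp only [H1loc.coe_add, Pi.add_apply, hu.2 t, hv.2 t]
  zero_mem' := ⟨fun t => by simp only [H1loc.coe_zero, Pi.zero_apply, neg_zero], fun t => by simp only [H1loc.coe_zero, Pi.zero_apply]⟩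
  smul_mem' := by
    intro c u hu
    refine ⟨fun t => ?_, fun t => ?_⟩
    · simp only [H1loc.coe_smul, Pi.smul_apply, hu.1 t, smul_eq_mul]; ring
    · simp only [H1loc.coe_smul, Pi.smul_apply, hu.2 t]

/-- The set `Φ_{k,ω} ⊆ H¹_o(ℝ)` of odd functions `φ` with `φ(t + ω) = φ(t) + 2πk`. -/
def PhiSet (ω : ℝ) (k : ℕ) : Set H1loc :=
  { φ | (∀ t : ℝ, φ.1 (-t) = - φ.1 t) ∧ ∀ t : ℝ, φ.1 (t + ω) = φ.1 t + 2 * Real.pi * k }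

/-- The action functional of the Lagrangian
`L(x, φ, ẋ, φ̇) = ½(x² + 1)φ̇² + ½ẋ² − x sin φ` over the interval `(0, ω)`. -/
def action (ω : ℝ) (x φ : H1loc) : ℝ :=
  ∫ t in Set.Ioo (0 : ℝ) ω,
    (1 / 2 * (x.1 t ^ 2 + 1) * (H1loc.wderiv φ t) ^ 2
      + 1 / 2 * (H1loc.wderiv x t) ^ 2 - x.1 t * Real.sin (φ.1 t))

end

/-! The `sin` term is at most `|x|`, and the extra `½ x² φ̇²` is nonnegative, so
`S(x, φ) ≥ ½‖φ̇‖² + ½‖ẋ‖² - ∫₀^ω |x|`. Since `x` is odd, `x 0 = 0` and Cauchy–Schwarz on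
`x t = ∫₀ᵗ ẋ` gives `|x t| ≤ ‖ẋ‖ √t`; integrating, `∫₀^ω |x| ≤ ⅔ ω^{3/2} ‖ẋ‖`, and `⅔ ≤ 1/√2`. -/

open Set

lemma integral_abs_le_sqrt_integral_sq_mul_sqrt {α : Type*} [MeasurableSpace α] {μ : Measure α}
    [IsFiniteMeasure μ] {f : α → ℝ} (hf : MemLp f 2 μ) :
    ∫ a, |f a| ∂μ ≤ √(∫ a, f a ^ 2 ∂μ) * √(μ.real univ) := by
  have hf_abs : MemLp (fun a => |f a|) (ENNReal.ofReal 2) μ := by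
    simpa [Real.norm_eq_abs] using hf.norm
  have h := integral_mul_le_Lp_mul_Lq_of_nonneg Real.HolderConjugate.two_two
    (ae_of_all _ fun a => abs_nonneg (f a)) (ae_of_all _ fun _ => zero_le_one) hf_abs
    (memLp_const (1 : ℝ))
  simpa [Real.sqrt_eq_rpow, Real.rpow_two, sq_abs] using h

lemma integral_sqrt_Ioo {ω : ℝ} (hω : 0 ≤ ω) :
    ∫ t in Ioo (0 : ℝ) ω, √t = 2 / 3 * ω ^ ((3 : ℝ) / 2) := by
  rw [← integral_Ioc_eq_integral_Ioo, ← intervalIntegral.integral_of_le hω]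
  simp_rw [Real.sqrt_eq_rpow]
  rw [integral_rpow (Or.inl (by norm_num)), Real.zero_rpow (by norm_num),
    show (1 : ℝ) / 2 + 1 = 3 / 2 by norm_num]
  ring

lemma two_div_three_le_inv_sqrt_two : (2 : ℝ) / 3 ≤ (√2)⁻¹ := by
  rw [← one_div, div_le_div_iff₀ (by norm_num) (by positivity)]
  nlinarith [Real.sq_sqrt (zero_le_two (α := ℝ)), Real.sqrt_nonneg 2]

lemma kinetic_sub_abs_le_lagrangian (x φ x' φ' : ℝ) :
    1 / 2 * φ' ^ 2 + 1 / 2 * x' ^ 2 - |x| ≤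
      1 / 2 * (x ^ 2 + 1) * φ' ^ 2 + 1 / 2 * x' ^ 2 - x * Real.sin φ := by
  have hsin : x * Real.sin φ ≤ |x| := by
    calc x * Real.sin φ ≤ |x * Real.sin φ| := le_abs_self _
      _ = |x| * |Real.sin φ| := abs_mul _ _
      _ ≤ |x| * 1 := by gcongr; exact Real.abs_sin_le_one φ
      _ = |x| := mul_one _
  nlinarith [sq_nonneg (x * φ')]

namespace H1loc

lemma memLp_wderiv_restrict (u : H1loc) {s : Set ℝ} (hs : Bornology.IsBounded s) :
    MemLp (wderiv u) 2 (volume.restrict s) := by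
  obtain ⟨r, hr⟩ := (Metric.isBounded_iff_subset_closedBall 0).mp hs
  obtain ⟨n, hn⟩ := exists_nat_gt r
  have hsub : s ⊆ Ioo (-(n : ℝ)) n := fun t ht => by
    have := hr ht
    rw [Real.closedBall_eq_Icc, zero_sub, zero_add] at this
    exact ⟨by linarith [this.1], by linarith [this.2]⟩
  exact (u.wderiv_memL2loc n).mono_measure (Measure.restrict_mono hsub le_rfl)

lemma abs_le_sqrt_integral_sq_mul_sqrt (u : H1loc) (hu : u.1 0 = 0) {t : ℝ} (ht : 0 ≤ t) :
    |u.1 t| ≤ √(∫ s in Ioc 0 t, wderiv u s ^ 2) * √t := by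
  have : IsFiniteMeasure (volume.restrict (Ioc (0 : ℝ) t)) := by
    rw [isFiniteMeasure_restrict]; exact measure_Ioc_lt_top.ne
  calc |u.1 t| = |∫ s in Ioc 0 t, wderiv u s| := by
        rw [u.integral_wderiv t, hu, zero_add, intervalIntegral.integral_of_le ht]
    _ ≤ ∫ s in Ioc 0 t, |wderiv u s| := abs_integral_le_integral_abs
    _ ≤ √(∫ s in Ioc 0 t, wderiv u s ^ 2) * √t := by
        simpa [ht] using integral_abs_le_sqrt_integral_sq_mul_sqrt
          (u.memLp_wderiv_restrict (s := Ioc 0 t) (Metric.isBounded_Ioc _ _))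

lemma integral_abs_Ioo_le (u : H1loc) (hu : u.1 0 = 0) {ω : ℝ} (hω : 0 ≤ ω) :
    ∫ t in Ioo 0 ω, |u.1 t| ≤ 2 / 3 * ω ^ ((3 : ℝ) / 2) * √(∫ t in Ioo 0 ω, wderiv u t ^ 2) := by
  set A := ∫ t in Ioo 0 ω, wderiv u t ^ 2
  have hA : IntegrableOn (fun t => wderiv u t ^ 2) (Ioo 0 ω) :=
    (u.memLp_wderiv_restrict (Metric.isBounded_Ioo _ _)).integrable_sq
  have hpointwise : ∀ t ∈ Ioo 0 ω, |u.1 t| ≤ √A * √t := fun t ht => by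
    refine (u.abs_le_sqrt_integral_sq_mul_sqrt hu ht.1.le).trans ?_
    gcongr
    exact setIntegral_mono_set hA (ae_of_all _ fun _ => sq_nonneg _)
      (Ioc_subset_Ioo_right ht.2).eventuallyLE
  calc ∫ t in Ioo 0 ω, |u.1 t| ≤ ∫ t in Ioo 0 ω, √A * √t :=
        setIntegral_mono_on (u.2.1.abs.integrableOn_Icc.mono_set Ioo_subset_Icc_self)
          ((continuous_const.mul Real.continuous_sqrt).integrableOn_Icc.mono_set
            Ioo_subset_Icc_self) measurableSet_Ioo hpointwise
    _ = 2 / 3 * ω ^ ((3 : ℝ) / 2) * √A := by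
        rw [integral_const_mul, integral_sqrt_Ioo hω, mul_comm]

end H1loc

lemma kinetic_sub_integral_abs_le_action (ω : ℝ) (x φ : H1loc) :
    1 / 2 * (∫ t in Ioo 0 ω, H1loc.wderiv φ t ^ 2) + 1 / 2 * (∫ t in Ioo 0 ω, H1loc.wderiv x t ^ 2)
      - ∫ t in Ioo 0 ω, |x.1 t| ≤ action ω x φ := by
  have hφ' : IntegrableOn (fun t => H1loc.wderiv φ t ^ 2) (Ioo 0 ω) :=
    (φ.memLp_wderiv_restrict (Metric.isBounded_Ioo _ _)).integrable_sq
  have hx' : IntegrableOn (fun t => H1loc.wderiv x t ^ 2) (Ioo 0 ω) :=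
    (x.memLp_wderiv_restrict (Metric.isBounded_Ioo _ _)).integrable_sq
  have hx : IntegrableOn (fun t => |x.1 t|) (Ioo 0 ω) :=
    x.2.1.abs.integrableOn_Icc.mono_set Ioo_subset_Icc_self
  have hkinetic : IntegrableOn (fun t => 1 / 2 * (x.1 t ^ 2 + 1) * H1loc.wderiv φ t ^ 2)
      (Ioo 0 ω) :=
    hφ'.continuousOn_mul_of_subset
      (continuous_const.mul ((x.2.1.pow 2).add continuous_const)).continuousOn
      isCompact_Icc measurableSet_Ioo Ioo_subset_Icc_self
  have hpotential : IntegrableOn (fun t => x.1 t * Real.sin (φ.1 t)) (Ioo 0 ω) :=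
    (x.2.1.mul (Real.continuous_sin.comp φ.2.1)).integrableOn_Icc.mono_set Ioo_subset_Icc_self
  have hquadratic : IntegrableOn
      (fun t => 1 / 2 * H1loc.wderiv φ t ^ 2 + 1 / 2 * H1loc.wderiv x t ^ 2) (Ioo 0 ω) :=
    (hφ'.const_mul _).fun_add (hx'.const_mul _)
  calc _ = ∫ t in Ioo 0 ω, (1 / 2 * H1loc.wderiv φ t ^ 2 + 1 / 2 * H1loc.wderiv x t ^ 2
        - |x.1 t|) := by
        rw [← integral_const_mul, ← integral_const_mul,
          ← integral_add (hφ'.const_mul _) (hx'.const_mul _),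
          ← integral_sub hquadratic hx]
    _ ≤ action ω x φ :=
        integral_mono (hquadratic.fun_sub hx)
          ((hkinetic.fun_add (hx'.const_mul _)).fun_sub hpotential)
          fun t => kinetic_sub_abs_le_lagrangian _ _ _ _

theorem action_lower_bound_general (ω : ℝ) (hω : 0 < ω) (x φ : H1loc)
    (hx : x ∈ Hodd) :
    action ω x φ ≥
      1 / 2 * (∫ t in Set.Ioo (0 : ℝ) ω, (H1loc.wderiv φ t) ^ 2)
        + 1 / 2 * (∫ t in Set.Ioo (0 : ℝ) ω, (H1loc.wderiv x t) ^ 2)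
        - ω ^ ((3 : ℝ) / 2) / Real.sqrt 2
            * Real.sqrt (∫ t in Set.Ioo (0 : ℝ) ω, (H1loc.wderiv x t) ^ 2) := by
  have hx0 : x.1 0 = 0 := self_eq_neg.mp (by simpa using hx 0)
  have hconst : 2 / 3 * ω ^ ((3 : ℝ) / 2) ≤ ω ^ ((3 : ℝ) / 2) / √2 := by
    calc 2 / 3 * ω ^ ((3 : ℝ) / 2) ≤ (√2)⁻¹ * ω ^ ((3 : ℝ) / 2) := by
          gcongr; exact two_div_three_le_inv_sqrt_two
      _ = ω ^ ((3 : ℝ) / 2) / √2 := by ring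
  calc action ω x φ
      ≥ 1 / 2 * (∫ t in Ioo 0 ω, H1loc.wderiv φ t ^ 2)
          + 1 / 2 * (∫ t in Ioo 0 ω, H1loc.wderiv x t ^ 2) - ∫ t in Ioo 0 ω, |x.1 t| :=
        kinetic_sub_integral_abs_le_action ω x φ
    _ ≥ 1 / 2 * (∫ t in Ioo 0 ω, H1loc.wderiv φ t ^ 2)
          + 1 / 2 * (∫ t in Ioo 0 ω, H1loc.wderiv x t ^ 2)
          - 2 / 3 * ω ^ ((3 : ℝ) / 2) * √(∫ t in Ioo 0 ω, H1loc.wderiv x t ^ 2) := by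
        gcongr
        exact x.integral_abs_Ioo_le hx0 hω.le
    _ ≥ _ := by gcongr

/-- Statement 9: lower bound for the action. For every `ω > 0` and every pair
`(x, φ) ∈ H¹_o(ℝ) × H¹_o(ℝ)`,
`S(x,φ) ≥ ½‖φ̇‖²_{L²(0,ω)} + ½‖ẋ‖²_{L²(0,ω)} − (ω^{3/2}/√2)‖ẋ‖_{L²(0,ω)}`. -/
theorem action_lower_bound (ω : ℝ) (hω : 0 < ω) (x φ : H1loc)
    (hx : x ∈ Hodd) (hφ : φ ∈ Hodd) :
    action ω x φ ≥
      1 / 2 * (∫ t in Set.Ioo (0 : ℝ) ω, (H1loc.wderiv φ t) ^ 2)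
        + 1 / 2 * (∫ t in Set.Ioo (0 : ℝ) ω, (H1loc.wderiv x t) ^ 2)
        - ω ^ ((3 : ℝ) / 2) / Real.sqrt 2
            * Real.sqrt (∫ t in Set.Ioo (0 : ℝ) ω, (H1loc.wderiv x t) ^ 2) :=
  action_lower_bound_general ω hω x φ hx
end

section
/- Let ω > 0, k a positive integer. Any sequence (x_n, φ_n) in E_{k,ω} that is minimizing for the action functional S (i.e. S(x_n, φ_n) → inf_{E_{k,ω}} S) is bounded in X_ω × H¹_o(ℝ): the sequences ‖ẋ_n‖_{L²(0,ω)} and ‖φ̇_n‖_{L²(0,ω)} are bounded. -/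
open MeasureTheory

/-! Since `x` is odd, `x(0) = 0`, so `|x| ≤ ∫₀^ω |ẋ|` on `[0, ω]`, and Young's inequality
`ω|v| ≤ v²/4 + ω²` bounds the potential term by `‖ẋ‖²/4 + ω³`. Hence
`S(x, φ) ≥ ‖ẋ‖²/4 + ‖φ̇‖²/2 − ω³`, and along a minimizing sequence the actions converge, so
they are bounded above, and so are `‖ẋ_n‖` and `‖φ̇_n‖`. -/

open Set

lemma integrableOn_sq_of_memL2loc {f : ℝ → ℝ}
    (hf : ∀ n : ℕ, MemLp f 2 (volume.restrict (Ioo (-(n : ℝ)) n))) (a b : ℝ) :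
    IntegrableOn (fun t => f t ^ 2) (Icc a b) := by
  obtain ⟨n, hn⟩ := exists_nat_gt (max |a| |b|)
  have hsq : IntegrableOn (fun t => f t ^ 2) (Ioo (-(n : ℝ)) n) := (hf n).integrable_sq
  exact hsq.mono_set fun t ht => abs_lt.1 ((abs_le_max_abs_abs ht.1 ht.2).trans_lt hn)

lemma mul_setIntegral_abs_le {f : ℝ → ℝ} {a b : ℝ} (hab : a ≤ b)
    (hf : IntegrableOn f (Ioo a b)) (hf2 : IntegrableOn (fun t => f t ^ 2) (Ioo a b)) :
    (b - a) * ∫ t in Ioo a b, |f t| ≤ (∫ t in Ioo a b, f t ^ 2) / 4 + (b - a) ^ 3 := by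
  have young : ∀ t, (b - a) * |f t| ≤ f t ^ 2 / 4 + (b - a) ^ 2 := fun t => by
    nlinarith [sq_nonneg (|f t| / 2 - (b - a)), sq_abs (f t)]
  have hconst : IntegrableOn (fun _ => (b - a) ^ 2) (Ioo a b) :=
    integrableOn_const measure_Ioo_lt_top.ne
  have hbound : IntegrableOn (fun t => f t ^ 2 / 4 + (b - a) ^ 2) (Ioo a b) :=
    (hf2.div_const 4).add hconst
  calc (b - a) * ∫ t in Ioo a b, |f t|
      = ∫ t in Ioo a b, (b - a) * |f t| := (integral_const_mul _ _).symm
    _ ≤ ∫ t in Ioo a b, (f t ^ 2 / 4 + (b - a) ^ 2) :=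
        setIntegral_mono_on (hf.abs.const_mul _) hbound measurableSet_Ioo fun t _ => young t
    _ = (∫ t in Ioo a b, f t ^ 2) / 4 + (b - a) ^ 3 := by
        rw [integral_add (hf2.div_const 4) hconst,
          integral_div, setIntegral_const, measureReal_def, Real.volume_Ioo,
          ENNReal.toReal_ofReal (sub_nonneg.2 hab), smul_eq_mul]
        ring

namespace H1loc

lemma integrableOn_wderiv_sq (u : H1loc) (a b : ℝ) :
    IntegrableOn (fun t => wderiv u t ^ 2) (Ioo a b) :=
  (integrableOn_sq_of_memL2loc u.wderiv_memL2loc a b).mono_set Ioo_subset_Icc_self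

lemma integrableOn_wderiv (u : H1loc) {a b : ℝ} (hab : a ≤ b) :
    IntegrableOn (wderiv u) (Ioo a b) :=
  (intervalIntegrable_iff_integrableOn_Ioo_of_le hab).1
    (intervalIntegrable_of_memL2loc u.wderiv_memL2loc a b)

lemma abs_sub_le_setIntegral_abs_wderiv (u : H1loc) {a t b : ℝ} (hat : a ≤ t) (htb : t ≤ b) :
    |u.1 t - u.1 a| ≤ ∫ s in Ioo a b, |wderiv u s| := by
  have hint := intervalIntegrable_of_memL2loc u.wderiv_memL2loc
  have hdiff : u.1 t - u.1 a = ∫ s in a..t, wderiv u s := by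
    rw [u.integral_wderiv t, u.integral_wderiv a,
      ← intervalIntegral.integral_interval_sub_left (hint 0 t) (hint 0 a)]
    ring
  calc |u.1 t - u.1 a| ≤ ∫ s in a..t, |wderiv u s| := by
        rw [hdiff]; exact intervalIntegral.abs_integral_le_integral_abs hat
    _ ≤ ∫ s in a..b, |wderiv u s| :=
        intervalIntegral.integral_mono_interval le_rfl hat htb
          (Filter.Eventually.of_forall fun _ => abs_nonneg _) (hint a b).abs
    _ = ∫ s in Ioo a b, |wderiv u s| := by
        rw [intervalIntegral.integral_of_le (hat.trans htb), integral_Ioc_eq_integral_Ioo]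

end H1loc

lemma integrableOn_action_integrand (ω : ℝ) (u p : H1loc) :
    IntegrableOn (fun t => 1 / 2 * (u.1 t ^ 2 + 1) * H1loc.wderiv p t ^ 2
      + 1 / 2 * H1loc.wderiv u t ^ 2 - u.1 t * Real.sin (p.1 t)) (Ioo 0 ω) := by
  obtain ⟨C, hC⟩ := (isCompact_Icc (a := (0 : ℝ)) (b := ω)).exists_bound_of_continuousOn
    (u.2.1.pow 2).continuousOn
  have hkinetic : IntegrableOn (fun t => 1 / 2 * (u.1 t ^ 2 + 1) * H1loc.wderiv p t ^ 2)
      (Ioo 0 ω) := by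
    refine (p.integrableOn_wderiv_sq 0 ω).bdd_mul (c := 1 / 2 * (C + 1))
      (continuous_const.mul ((u.2.1.pow 2).add continuous_const)).aestronglyMeasurable ?_
    filter_upwards [ae_restrict_mem measurableSet_Ioo] with t ht
    have hCt : u.1 t ^ 2 ≤ C := (le_abs_self _).trans (hC t (Ioo_subset_Icc_self ht))
    rw [Real.norm_eq_abs, abs_of_nonneg (by positivity)]
    linarith
  have hpotential : IntegrableOn (fun t => u.1 t * Real.sin (p.1 t)) (Ioo 0 ω) :=
    ((u.2.1.mul (Real.continuous_sin.comp p.2.1)).continuousOn.integrableOn_Icc).mono_set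
      Ioo_subset_Icc_self
  exact (hkinetic.add ((u.integrableOn_wderiv_sq 0 ω).const_mul _)).sub hpotential

lemma le_action_of_map_zero {ω : ℝ} (hω : 0 ≤ ω) (u p : H1loc) (hu0 : u.1 0 = 0) :
    (∫ t in Ioo 0 ω, H1loc.wderiv u t ^ 2) / 4 + (∫ t in Ioo 0 ω, H1loc.wderiv p t ^ 2) / 2
      - ω ^ 3 ≤ action ω u p := by
  set u' := H1loc.wderiv u
  set p' := H1loc.wderiv p
  set K := ∫ s in Ioo 0 ω, |u' s|
  have hsup : ∀ t ∈ Ioo 0 ω, |u.1 t| ≤ K := fun t ht => by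
    simpa [hu0] using u.abs_sub_le_setIntegral_abs_wderiv ht.1.le ht.2.le
  have hpointwise : ∀ t ∈ Ioo 0 ω, 1 / 2 * p' t ^ 2 + 1 / 2 * u' t ^ 2 - K
      ≤ 1 / 2 * (u.1 t ^ 2 + 1) * p' t ^ 2 + 1 / 2 * u' t ^ 2 - u.1 t * Real.sin (p.1 t) := by
    intro t ht
    have hpot : u.1 t * Real.sin (p.1 t) ≤ K := calc
      u.1 t * Real.sin (p.1 t) ≤ |u.1 t| * |Real.sin (p.1 t)| :=
          (le_abs_self _).trans_eq (abs_mul _ _)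
      _ ≤ |u.1 t| := mul_le_of_le_one_right (abs_nonneg _) (Real.abs_sin_le_one _)
      _ ≤ K := hsup t ht
    nlinarith [mul_nonneg (sq_nonneg (u.1 t)) (sq_nonneg (p' t))]
  have hp2 := p.integrableOn_wderiv_sq 0 ω
  have hu2 := u.integrableOn_wderiv_sq 0 ω
  have hK : IntegrableOn (fun _ => K) (Ioo 0 ω) := integrableOn_const measure_Ioo_lt_top.ne
  have hkin : IntegrableOn (fun t => 1 / 2 * p' t ^ 2 + 1 / 2 * u' t ^ 2) (Ioo 0 ω) :=
    (hp2.const_mul _).add (hu2.const_mul _)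
  have hlower : ∫ t in Ioo 0 ω, (1 / 2 * p' t ^ 2 + 1 / 2 * u' t ^ 2 - K) ≤ action ω u p :=
    setIntegral_mono_on (hkin.sub hK) (integrableOn_action_integrand ω u p) measurableSet_Ioo
      hpointwise
  rw [integral_sub hkin hK, integral_add (hp2.const_mul _) (hu2.const_mul _),
    integral_const_mul, integral_const_mul,
    setIntegral_const, measureReal_def, Real.volume_Ioo, sub_zero, ENNReal.toReal_ofReal hω,
    smul_eq_mul] at hlower
  have hyoung := mul_setIntegral_abs_le hω (u.integrableOn_wderiv hω) hu2
  rw [sub_zero] at hyoung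
  linarith

open Filter in
theorem minimizing_sequence_bounded_general (ω : ℝ) (hω : 0 < ω) (k : ℕ)
    (x φ : ℕ → H1loc)
    (hxmem : ∀ n, x n ∈ Xomega ω)
    (hmin : Tendsto (fun n => action ω (x n) (φ n)) atTop
      (nhds (sInf { r : ℝ | ∃ a b : H1loc,
        a ∈ Xomega ω ∧ b ∈ PhiSet ω k ∧ action ω a b = r }))) :
    ∃ C : ℝ,
      (∀ n, Real.sqrt (∫ t in Set.Ioo (0 : ℝ) ω, (H1loc.wderiv (x n) t) ^ 2) ≤ C) ∧
      (∀ n, Real.sqrt (∫ t in Set.Ioo (0 : ℝ) ω, (H1loc.wderiv (φ n) t) ^ 2) ≤ C) := by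
  obtain ⟨M, hM⟩ := hmin.bddAbove_range
  have hbound n := (le_action_of_map_zero hω.le (x n) (φ n)
    (Function.Odd.map_zero (hxmem n).1)).trans (hM ⟨n, rfl⟩)
  refine ⟨Real.sqrt (4 * (M + ω ^ 3)), fun n => ?_, fun n => ?_⟩ <;>
  · have hx : 0 ≤ ∫ t in Ioo 0 ω, H1loc.wderiv (x n) t ^ 2 :=
      setIntegral_nonneg measurableSet_Ioo fun t _ => sq_nonneg _
    have hφ : 0 ≤ ∫ t in Ioo 0 ω, H1loc.wderiv (φ n) t ^ 2 :=
      setIntegral_nonneg measurableSet_Ioo fun t _ => sq_nonneg _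
    exact Real.sqrt_le_sqrt (by linarith [hbound n])

open Filter in
/-- Statement 17: any minimizing sequence `(x_n, φ_n) ∈ E_{k,ω} = X_ω × Φ_{k,ω}` for the
action functional (i.e. `S(x_n, φ_n) → inf S`) is bounded: the norms
`‖ẋ_n‖_{L²(0,ω)}` and `‖φ̇_n‖_{L²(0,ω)}` are bounded. -/
theorem minimizing_sequence_bounded (ω : ℝ) (hω : 0 < ω) (k : ℕ) (hk : 0 < k)
    (x φ : ℕ → H1loc)
    (hxmem : ∀ n, x n ∈ Xomega ω) (hφmem : ∀ n, φ n ∈ PhiSet ω k)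
    (hmin : Tendsto (fun n => action ω (x n) (φ n)) atTop
      (nhds (sInf { r : ℝ | ∃ a b : H1loc,
        a ∈ Xomega ω ∧ b ∈ PhiSet ω k ∧ action ω a b = r }))) :
    ∃ C : ℝ,
      (∀ n, Real.sqrt (∫ t in Set.Ioo (0 : ℝ) ω, (H1loc.wderiv (x n) t) ^ 2) ≤ C) ∧
      (∀ n, Real.sqrt (∫ t in Set.Ioo (0 : ℝ) ω, (H1loc.wderiv (φ n) t) ^ 2) ≤ C) :=
  minimizing_sequence_bounded_general ω hω k x φ hxmem hmin
end
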